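/- Suppose the sequence (x^k, y^k) is generated by N-PDHG1, i.e., x^{k+1} ∈ X minimizes x ↦ Φ(x, y^k) + (1/2)⟨x − x^k, (rAᵀA + Q)(x − x^k)⟩ over X, and y^{k+1} ∈ Y maximizes y ↦ Φ(2x^{k+1} − x^k, y) − (1/(2r))‖y − y^k‖² over Y. Let u* = (x*, y*) ∈ M satisfy θ(u) − θ(u*) + ⟨u − u*, M̂u*⟩ ≥ 0 for all u ∈ M (equivalently, (x*, y*) is a saddle point of Φ over X × Y). Then for every k: ‖u* − u^{k+1}‖²_H ≤ ‖u* − u^k‖²_H − ‖u^k − u^{k+1}‖²_H, where u^k = (x^k, y^k). -/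

import Mathlib

open Matrix

noncomputable section

/-- The saddle function `Φ(x, y) = θ₁(x) − ⟨y, Ax⟩ − θ₂(y)`. -/
def Phi {n m : ℕ} (θ1 : (Fin n → ℝ) → ℝ) (θ2 : (Fin m → ℝ) → ℝ)
    (A : Matrix (Fin m) (Fin n) ℝ) (x : Fin n → ℝ) (y : Fin m → ℝ) : ℝ :=
  θ1 x - y ⬝ᵥ (A *ᵥ x) - θ2 y

/-- The bilinear form `(u₁, u₂) ↦ ⟨u₁, H u₂⟩` of `H = [[rAᵀA + Q, Aᵀ], [A, (1/r)I]]`. -/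
def Hbil {n m : ℕ} (A : Matrix (Fin m) (Fin n) ℝ) (Q : Matrix (Fin n) (Fin n) ℝ) (r : ℝ)
    (u₁ u₂ : (Fin n → ℝ) × (Fin m → ℝ)) : ℝ :=
  u₁.1 ⬝ᵥ ((r • (Aᵀ * A) + Q) *ᵥ u₂.1) + u₁.1 ⬝ᵥ (Aᵀ *ᵥ u₂.2) + u₁.2 ⬝ᵥ (A *ᵥ u₂.1)
    + 1 / r * (u₁.2 ⬝ᵥ u₂.2)

/-- The squared `H`-weighted norm `‖u‖²_H = ⟨u, Hu⟩`. -/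
def HnormSq {n m : ℕ} (A : Matrix (Fin m) (Fin n) ℝ) (Q : Matrix (Fin n) (Fin n) ℝ) (r : ℝ)
    (u : (Fin n → ℝ) × (Fin m → ℝ)) : ℝ := Hbil A Q r u u

/-- `⟨u − u', M̂v⟩` where `M̂ = [[0, −Aᵀ], [A, 0]]`, i.e. `M̂(x, y) = (−Aᵀy, Ax)`. -/
def Mhat {n m : ℕ} (A : Matrix (Fin m) (Fin n) ℝ)
    (u : (Fin n → ℝ) × (Fin m → ℝ)) : (Fin n → ℝ) × (Fin m → ℝ) :=
  (-(Aᵀ *ᵥ u.2), A *ᵥ u.1)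

/-- The Euclidean inner product on `ℝⁿ × ℝᵐ`. -/
def pdot {n m : ℕ} (u₁ u₂ : (Fin n → ℝ) × (Fin m → ℝ)) : ℝ := u₁.1 ⬝ᵥ u₂.1 + u₁.2 ⬝ᵥ u₂.2

/-- The N-PDHG1 iteration: `x^{k+1} ∈ X` minimizes
`x ↦ Φ(x, yᵏ) + (1/2)⟨x − xᵏ, (rAᵀA + Q)(x − xᵏ)⟩` over `X`, and `y^{k+1} ∈ Y` maximizes
`y ↦ Φ(2x^{k+1} − xᵏ, y) − (1/(2r))‖y − yᵏ‖²` over `Y`. -/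
def NPDHG1 {n m : ℕ} (θ1 : (Fin n → ℝ) → ℝ) (θ2 : (Fin m → ℝ) → ℝ)
    (X : Set (Fin n → ℝ)) (Y : Set (Fin m → ℝ)) (A : Matrix (Fin m) (Fin n) ℝ)
    (r : ℝ) (Q : Matrix (Fin n) (Fin n) ℝ)
    (x : ℕ → Fin n → ℝ) (y : ℕ → Fin m → ℝ) : Prop :=
  (∀ k : ℕ, x (k + 1) ∈ X ∧ ∀ z ∈ X,
      Phi θ1 θ2 A (x (k + 1)) (y k)
          + 1 / 2 * ((x (k + 1) - x k) ⬝ᵥ ((r • (Aᵀ * A) + Q) *ᵥ (x (k + 1) - x k)))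
        ≤ Phi θ1 θ2 A z (y k)
          + 1 / 2 * ((z - x k) ⬝ᵥ ((r • (Aᵀ * A) + Q) *ᵥ (z - x k)))) ∧
  (∀ k : ℕ, y (k + 1) ∈ Y ∧ ∀ z ∈ Y,
      Phi θ1 θ2 A ((2 : ℝ) • x (k + 1) - x k) z - 1 / (2 * r) * ((z - y k) ⬝ᵥ (z - y k))
        ≤ Phi θ1 θ2 A ((2 : ℝ) • x (k + 1) - x k) (y (k + 1))
          - 1 / (2 * r) * ((y (k + 1) - y k) ⬝ᵥ (y (k + 1) - y k)))

/-!
Each half-step of N-PDHG1 is a proximal step for a convex function in a symmetric quadratic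
metric (`rAᵀA + Q` for `x`, `(1/r) I` for `y`), so its optimality condition is a variational
inequality. Evaluating the primal and dual inequalities at `u*` and adding the saddle-point
inequality at `u^{k+1}`, the coupling terms recombine into `⟨u* − u^{k+1}, H(u^{k+1} − uᵏ)⟩ ≥ 0`;
expanding `‖u* − uᵏ‖²_H = ‖(u* − u^{k+1}) + (u^{k+1} − uᵏ)‖²_H` then gives the contraction.
-/

open Filter Topology

theorem nonneg_of_forall_nonneg_add_mul {c d : ℝ}
    (h : ∀ t ∈ Set.Ioc (0 : ℝ) 1, 0 ≤ c + t * d) : 0 ≤ c := by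
  have hlim : Tendsto (fun t : ℝ => c + t * d) (𝓝[>] 0) (𝓝 c) := by
    have : Continuous (fun t : ℝ => c + t * d) := by fun_prop
    simpa using (this.tendsto 0).mono_left nhdsWithin_le_nhds
  exact ge_of_tendsto hlim (mem_of_superset (Ioc_mem_nhdsGT one_pos) h)

theorem ConvexOn.prox_variational_inequality {E : Type*} [AddCommGroup E] [Module ℝ E]
    {X : Set E} {f : E → ℝ} (hf : ConvexOn ℝ X f) {β : LinearMap.BilinForm ℝ E}
    (hβ : β.IsSymm) {p xp : E} (hxp : xp ∈ X)
    (hmin : IsMinOn (fun z => f z + β (z - p) (z - p) / 2) X xp) {z : E} (hz : z ∈ X) :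
    0 ≤ f z - f xp + β (z - xp) (xp - p) := by
  -- compare `xp` with `xp + t • (z - xp)` and let `t → 0⁺`
  set w := z - xp with hw
  set v := xp - p with hv
  refine nonneg_of_forall_nonneg_add_mul (d := β w w / 2) fun t ⟨ht0, ht1⟩ => ?_
  have hcomb : (1 - t) • xp + t • z = xp + t • w := by
    rw [hw, smul_sub, sub_smul, one_smul]; abel
  have hmem : xp + t • w ∈ X :=
    hcomb ▸ hf.1 hxp hz (sub_nonneg.2 ht1) ht0.le (sub_add_cancel 1 t)
  have hconv : f (xp + t • w) ≤ (1 - t) * f xp + t * f z :=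
    hcomb ▸ hf.2 hxp hz (sub_nonneg.2 ht1) ht0.le (sub_add_cancel 1 t)
  have hquad : β (xp + t • w - p) (xp + t • w - p)
      = β v v + 2 * t * β w v + t ^ 2 * β w w := by
    have : xp + t • w - p = v + t • w := by rw [hv]; abel
    simp only [this, map_add, map_smul, LinearMap.add_apply, LinearMap.smul_apply, smul_eq_mul,
      hβ.eq v w]
    ring
  have hle := isMinOn_iff.1 hmin _ hmem
  simp only [hquad] at hle
  have : 0 ≤ t * (f z - f xp + β w v + t * (β w w / 2)) := by nlinarith
  exact nonneg_of_mul_nonneg_right this ht0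

section NPDHG

variable {n m : ℕ} {θ1 : (Fin n → ℝ) → ℝ} {θ2 : (Fin m → ℝ) → ℝ}
  {X : Set (Fin n → ℝ)} {Y : Set (Fin m → ℝ)} {A : Matrix (Fin m) (Fin n) ℝ}
  {r : ℝ} {Q : Matrix (Fin n) (Fin n) ℝ}

theorem convexOn_Phi_left (hθ1 : ConvexOn ℝ X θ1) (y : Fin m → ℝ) :
    ConvexOn ℝ X (fun x => Phi θ1 θ2 A x y) := by
  have hlin := (toLinearMap₂' ℝ A y).concaveOn hθ1.1
  refine ((hθ1.sub hlin).add_const (-θ2 y)).congr fun x _ => ?_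
  simp only [sub_eq_add_neg, Pi.add_apply, Pi.neg_apply, toLinearMap₂'_apply', Phi]

theorem convexOn_neg_Phi_right (hθ2 : ConvexOn ℝ Y θ2) (x : Fin n → ℝ) :
    ConvexOn ℝ Y (fun y => -Phi θ1 θ2 A x y) := by
  have hlin := ((toLinearMap₂' ℝ A).flip x).convexOn hθ2.1
  refine ((hθ2.add hlin).add_const (-θ1 x)).congr fun y _ => ?_
  simp only [Pi.add_apply, LinearMap.flip_apply, toLinearMap₂'_apply', Phi, neg_sub]
  ring

theorem NPDHG1.primal_ineq {x : ℕ → Fin n → ℝ} {y : ℕ → Fin m → ℝ}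
    (halg : NPDHG1 θ1 θ2 X Y A r Q x y) (hθ1 : ConvexOn ℝ X θ1) (hQ : Q.IsSymm) (k : ℕ)
    {z : Fin n → ℝ} (hz : z ∈ X) :
    0 ≤ Phi θ1 θ2 A z (y k) - Phi θ1 θ2 A (x (k + 1)) (y k)
      + (z - x (k + 1)) ⬝ᵥ ((r • (Aᵀ * A) + Q) *ᵥ (x (k + 1) - x k)) := by
  have hG : (r • (Aᵀ * A) + Q).IsSymm := by
    simp only [Matrix.IsSymm, transpose_add, transpose_smul, transpose_mul, transpose_transpose,
      hQ.eq]
  have hmin : IsMinOn (fun z => Phi θ1 θ2 A z (y k)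
      + (r • (Aᵀ * A) + Q).toBilin' (z - x k) (z - x k) / 2) X (x (k + 1)) :=
    isMinOn_iff.2 fun z hz => by
      have := (halg.1 k).2 z hz
      simp only [toBilin'_apply']
      linarith
  simpa only [toBilin'_apply'] using (convexOn_Phi_left hθ1 (y k)).prox_variational_inequality
    (isSymm_toBilin'_iff_isSymm.2 hG) (halg.1 k).1 hmin hz

theorem NPDHG1.dual_ineq {x : ℕ → Fin n → ℝ} {y : ℕ → Fin m → ℝ}
    (halg : NPDHG1 θ1 θ2 X Y A r Q x y) (hθ2 : ConvexOn ℝ Y θ2) (k : ℕ)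
    {z : Fin m → ℝ} (hz : z ∈ Y) :
    0 ≤ Phi θ1 θ2 A ((2 : ℝ) • x (k + 1) - x k) (y (k + 1))
      - Phi θ1 θ2 A ((2 : ℝ) • x (k + 1) - x k) z
      + r⁻¹ * ((z - y (k + 1)) ⬝ᵥ (y (k + 1) - y k)) := by
  have hB : (r⁻¹ • (1 : Matrix (Fin m) (Fin m) ℝ)).IsSymm := isSymm_one.smul r⁻¹
  have hquad : ∀ v w : Fin m → ℝ, (r⁻¹ • (1 : Matrix (Fin m) (Fin m) ℝ)).toBilin' v w
      = r⁻¹ * (v ⬝ᵥ w) := fun v w => by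
    rw [toBilin'_apply', smul_mulVec, one_mulVec, dotProduct_smul, smul_eq_mul]
  have hmin : IsMinOn (fun z => -Phi θ1 θ2 A ((2 : ℝ) • x (k + 1) - x k) z
      + (r⁻¹ • (1 : Matrix (Fin m) (Fin m) ℝ)).toBilin' (z - y k) (z - y k) / 2)
      Y (y (k + 1)) :=
    isMinOn_iff.2 fun z hz => by
      have := (halg.2 k).2 z hz
      have hhalf : ∀ c : ℝ, 1 / (2 * r) * c = r⁻¹ * c / 2 := fun c => by ring
      rw [hhalf, hhalf] at this
      simp only [hquad]
      linarith
  have := (convexOn_neg_Phi_right hθ2 _).prox_variational_inequality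
    (isSymm_toBilin'_iff_isSymm.2 hB) (halg.2 k).1 hmin hz
  rw [hquad] at this
  linarith

theorem HnormSq_add (hQ : Q.IsSymm) (a b : (Fin n → ℝ) × (Fin m → ℝ)) :
    HnormSq A Q r (a + b) = HnormSq A Q r a + 2 * Hbil A Q r a b + HnormSq A Q r b := by
  have hQab : b.1 ⬝ᵥ Q *ᵥ a.1 = a.1 ⬝ᵥ Q *ᵥ b.1 := by
    simpa only [toBilin'_apply'] using (isSymm_toBilin'_iff_isSymm.2 hQ).eq b.1 a.1
  have hAab := dotProduct_comm (A *ᵥ b.1) (A *ᵥ a.1)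
  have hab := dotProduct_comm b.2 a.2
  simp only [HnormSq, Hbil, Prod.fst_add, Prod.snd_add, add_mulVec, smul_mulVec, mulVec_add,
    ← mulVec_mulVec, dotProduct_transpose_mulVec, dotProduct_add, add_dotProduct,
    dotProduct_smul, smul_eq_mul]
  linear_combination (-r) * hAab + hQab + (1 / r) * hab

theorem HnormSq_neg (u : (Fin n → ℝ) × (Fin m → ℝ)) : HnormSq A Q r (-u) = HnormSq A Q r u := by
  simp only [HnormSq, Hbil, Prod.fst_neg, Prod.snd_neg, mulVec_neg, dotProduct_neg,
    neg_dotProduct, neg_neg]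

theorem Hbil_sub_eq_residual_sum (p : (Fin n → ℝ) × (Fin m → ℝ)) (x₀ x₁ : Fin n → ℝ)
    (y₀ y₁ : Fin m → ℝ) :
    Hbil A Q r (p - (x₁, y₁)) ((x₁, y₁) - (x₀, y₀)) =
      (Phi θ1 θ2 A p.1 y₀ - Phi θ1 θ2 A x₁ y₀ + (p.1 - x₁) ⬝ᵥ ((r • (Aᵀ * A) + Q) *ᵥ (x₁ - x₀)))
      + (Phi θ1 θ2 A ((2 : ℝ) • x₁ - x₀) y₁ - Phi θ1 θ2 A ((2 : ℝ) • x₁ - x₀) p.2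
        + r⁻¹ * ((p.2 - y₁) ⬝ᵥ (y₁ - y₀)))
      + ((θ1 x₁ + θ2 y₁) - (θ1 p.1 + θ2 p.2) + pdot ((x₁, y₁) - p) (Mhat A p)) := by
  simp only [Hbil, Phi, pdot, Mhat, Prod.fst_sub, Prod.snd_sub, add_mulVec, smul_mulVec,
    mulVec_sub, mulVec_smul, ← mulVec_mulVec, dotProduct_transpose_mulVec, dotProduct_add,
    dotProduct_sub, sub_dotProduct, dotProduct_smul, dotProduct_neg, smul_eq_mul]
  ring

end NPDHG

theorem stmt_18_general (n m : ℕ) (θ1 : (Fin n → ℝ) → ℝ) (θ2 : (Fin m → ℝ) → ℝ)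
    (hθ1 : ConvexOn ℝ Set.univ θ1) (hθ2 : ConvexOn ℝ Set.univ θ2)
    (X : Set (Fin n → ℝ)) (hXconvex : Convex ℝ X)
    (Y : Set (Fin m → ℝ)) (hYconvex : Convex ℝ Y)
    (A : Matrix (Fin m) (Fin n) ℝ) (r : ℝ)
    (Q : Matrix (Fin n) (Fin n) ℝ) (hQ : Q.PosDef)
    (x : ℕ → Fin n → ℝ) (y : ℕ → Fin m → ℝ) (halg : NPDHG1 θ1 θ2 X Y A r Q x y)
    (us : (Fin n → ℝ) × (Fin m → ℝ)) (husX : us.1 ∈ X) (husY : us.2 ∈ Y)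
    (hstar : ∀ u : (Fin n → ℝ) × (Fin m → ℝ), u.1 ∈ X → u.2 ∈ Y →
      (θ1 u.1 + θ2 u.2) - (θ1 us.1 + θ2 us.2) + pdot (u - us) (Mhat A us) ≥ 0) :
    ∀ k : ℕ,
      HnormSq A Q r (us - (x (k + 1), y (k + 1))) ≤
        HnormSq A Q r (us - (x k, y k))
          - HnormSq A Q r ((x k, y k) - (x (k + 1), y (k + 1))) := by
  intro k
  have hQsymm : Q.IsSymm := isHermitian_iff_isSymm.1 hQ.isHermitian
  have hcross :
      0 ≤ Hbil A Q r (us - (x (k + 1), y (k + 1))) ((x (k + 1), y (k + 1)) - (x k, y k)) := by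
    rw [Hbil_sub_eq_residual_sum (θ1 := θ1) (θ2 := θ2)]
    have hprimal := halg.primal_ineq (hθ1.subset (Set.subset_univ X) hXconvex) hQsymm k husX
    have hdual := halg.dual_ineq (hθ2.subset (Set.subset_univ Y) hYconvex) k husY
    have hsaddle := hstar (x (k + 1), y (k + 1)) (halg.1 k).1 (halg.2 k).1
    linarith
  have hsplit : us - (x k, y k)
      = (us - (x (k + 1), y (k + 1))) + ((x (k + 1), y (k + 1)) - (x k, y k)) :=
    (sub_add_sub_cancel _ _ _).symm
  rw [hsplit, HnormSq_add hQsymm, ← neg_sub (x (k + 1), y (k + 1)) (x k, y k), HnormSq_neg]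
  linarith

/-- Contraction of N-PDHG1 with respect to the `H`-norm around any
saddle point `u* = (x*, y*)` of `Φ` over `X × Y`. -/
theorem stmt_18 (n m : ℕ) (θ1 : (Fin n → ℝ) → ℝ) (θ2 : (Fin m → ℝ) → ℝ)
    (hθ1 : ConvexOn ℝ Set.univ θ1) (hθ2 : ConvexOn ℝ Set.univ θ2)
    (X : Set (Fin n → ℝ)) (hXne : X.Nonempty) (hXclosed : IsClosed X) (hXconvex : Convex ℝ X)
    (Y : Set (Fin m → ℝ)) (hYne : Y.Nonempty) (hYclosed : IsClosed Y) (hYconvex : Convex ℝ Y)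
    (A : Matrix (Fin m) (Fin n) ℝ) (r : ℝ) (hr : 0 < r)
    (Q : Matrix (Fin n) (Fin n) ℝ) (hQ : Q.PosDef)
    (x : ℕ → Fin n → ℝ) (y : ℕ → Fin m → ℝ) (halg : NPDHG1 θ1 θ2 X Y A r Q x y)
    (us : (Fin n → ℝ) × (Fin m → ℝ)) (husX : us.1 ∈ X) (husY : us.2 ∈ Y)
    (hstar : ∀ u : (Fin n → ℝ) × (Fin m → ℝ), u.1 ∈ X → u.2 ∈ Y →
      (θ1 u.1 + θ2 u.2) - (θ1 us.1 + θ2 us.2) + pdot (u - us) (Mhat A us) ≥ 0) :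
    ∀ k : ℕ,
      HnormSq A Q r (us - (x (k + 1), y (k + 1))) ≤
        HnormSq A Q r (us - (x k, y k))
          - HnormSq A Q r ((x k, y k) - (x (k + 1), y (k + 1))) :=
  stmt_18_general n m θ1 θ2 hθ1 hθ2 X hXconvex Y hYconvex A r Q hQ x y halg us husX husY hstar
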